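/- arXiv:2505.13631 — 3 statements merged into one kernel-verified Lean document; each statement's English description precedes it below -/
import Mathlib

section
/- Let f^{eq}_1, …, f^{eq}_L and f^{neq}_1, …, f^{neq}_L be maps between normed vector spaces Z_0, …, Z_L, each f^{eq}_i and f^{neq}_i M-Lipschitz with f^{eq}_i(0) = 0, and ‖f^{neq}_i(x)‖ ≤ B‖x‖ for all x. For γ = (γ_1, …, γ_L) ∈ ℝ^L define the perturbed network F_γ = (f^{eq}_L + γ_L f^{neq}_L) ∘ ⋯ ∘ (f^{eq}_1 + γ_1 f^{neq}_1) and the equivariant network F_0 (all γ_i = 0). If γ̄ = max_i |γ_i| and B ≤ M, then for all x, ‖F_γ(x) − F_0(x)‖ ≤ [Σ_{k=0}^{L−1} (1 + γ̄)^k] · γ̄ · B · M^{L−1} · ‖x‖. -/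
theorem stmt4
    {Z : ℕ → Type*} [∀ i, NormedAddCommGroup (Z i)] [∀ i, NormedSpace ℝ (Z i)]
    (L : ℕ) (hL : 1 ≤ L)
    (feq fneq : ∀ i, Z i → Z (i + 1)) (γ : ℕ → ℝ) (M B γbar : ℝ)
    (hM : 0 ≤ M) (hB : 0 ≤ B) (hBM : B ≤ M)
    (hfeqLip : ∀ i, ∀ a b : Z i, ‖feq i a - feq i b‖ ≤ M * ‖a - b‖)
    (hfeq0 : ∀ i, feq i 0 = 0)
    (hfneqLip : ∀ i, ∀ a b : Z i, ‖fneq i a - fneq i b‖ ≤ M * ‖a - b‖)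
    (hfneqB : ∀ i, ∀ a : Z i, ‖fneq i a‖ ≤ B * ‖a‖)
    (hγbar : 0 ≤ γbar) (hγ : ∀ i < L, |γ i| ≤ γbar)
    (x : Z 0) (z zeq : ∀ i, Z i)
    (hz0 : z 0 = x) (hzeq0 : zeq 0 = x)
    (hz : ∀ i < L, z (i + 1) = feq i (z i) + γ i • fneq i (z i))
    (hzeq : ∀ i < L, zeq (i + 1) = feq i (zeq i)) :
    ‖z L - zeq L‖ ≤
      (∑ k ∈ Finset.range L, (1 + γbar) ^ k) * γbar * B * M ^ (L - 1) * ‖x‖ := by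
  set S : ℕ → ℝ := fun n => ∑ k ∈ Finset.range n, (1 + γbar) ^ k with hS
  have hSnonneg : ∀ n, 0 ≤ S n := fun n =>
    Finset.sum_nonneg fun k _ => pow_nonneg (by linarith) k
  have key : ∀ i, i ≤ L → ‖z i‖ ≤ (M * (1 + γbar)) ^ i * ‖x‖ ∧
      ‖z i - zeq i‖ ≤ S i * γbar * B * M ^ (i - 1) * ‖x‖ := by
    intro i
    induction i with
    | zero =>
      intro _
      constructor
      · simp [hz0]
      · simp [hz0, hzeq0, hS]
    | succ n ih =>
      intro hn
      have hnL : n < L := hn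
      obtain ⟨h1, h2⟩ := ih (le_of_lt hnL)
      have hγn := hγ n hnL
      have hxn : (0:ℝ) ≤ ‖x‖ := norm_nonneg x
      have hznn : (0:ℝ) ≤ ‖z n‖ := norm_nonneg _
      have hfeqnorm : ∀ a : Z n, ‖feq n a‖ ≤ M * ‖a‖ := by
        intro a
        have := hfeqLip n a 0
        simpa [hfeq0 n] using this
      have hsmul : ‖γ n • fneq n (z n)‖ ≤ γbar * (B * ‖z n‖) := by
        rw [norm_smul, Real.norm_eq_abs]
        exact mul_le_mul hγn (hfneqB n (z n)) (norm_nonneg _) hγbar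
      have hzbound : ‖z (n+1)‖ ≤ (M + γbar * B) * ‖z n‖ := by
        rw [hz n hnL]
        calc ‖feq n (z n) + γ n • fneq n (z n)‖
            ≤ ‖feq n (z n)‖ + ‖γ n • fneq n (z n)‖ := norm_add_le _ _
          _ ≤ M * ‖z n‖ + γbar * (B * ‖z n‖) := add_le_add (hfeqnorm _) hsmul
          _ = (M + γbar * B) * ‖z n‖ := by ring
      have hpow : (0:ℝ) ≤ (M * (1 + γbar)) ^ n :=
        pow_nonneg (mul_nonneg hM (by linarith)) n
      have hzb2 : ‖z (n+1)‖ ≤ (M * (1 + γbar)) ^ (n+1) * ‖x‖ := by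
        calc ‖z (n+1)‖ ≤ (M + γbar * B) * ‖z n‖ := hzbound
          _ ≤ (M * (1 + γbar)) * ((M * (1 + γbar)) ^ n * ‖x‖) := by
              apply mul_le_mul _ h1 hznn (mul_nonneg hM (by linarith))
              nlinarith
          _ = (M * (1 + γbar)) ^ (n+1) * ‖x‖ := by ring
      refine ⟨hzb2, ?_⟩
      have hdiff : z (n+1) - zeq (n+1)
          = (feq n (z n) - feq n (zeq n)) + γ n • fneq n (z n) := by
        rw [hz n hnL, hzeq n hnL]; abel
      have hMe : M * (S n * γbar * B * M ^ (n - 1) * ‖x‖) ≤ S n * γbar * B * M ^ n * ‖x‖ := by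
        cases n with
        | zero => simp [hS]
        | succ m =>
          apply le_of_eq
          simp only [Nat.add_sub_cancel, pow_succ]
          ring
      calc ‖z (n+1) - zeq (n+1)‖
          ≤ ‖feq n (z n) - feq n (zeq n)‖ + ‖γ n • fneq n (z n)‖ := by
            rw [hdiff]; exact norm_add_le _ _
        _ ≤ M * ‖z n - zeq n‖ + γbar * (B * ‖z n‖) :=
            add_le_add (hfeqLip n _ _) hsmul
        _ ≤ M * (S n * γbar * B * M ^ (n - 1) * ‖x‖)
            + γbar * (B * ((M * (1 + γbar)) ^ n * ‖x‖)) := by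
            have := mul_le_mul_of_nonneg_left h2 hM
            have h2' := mul_le_mul_of_nonneg_left h1 hB
            have := mul_le_mul_of_nonneg_left h2' hγbar
            linarith
        _ ≤ S n * γbar * B * M ^ n * ‖x‖
            + (1 + γbar) ^ n * γbar * B * M ^ n * ‖x‖ := by
            have : γbar * (B * ((M * (1 + γbar)) ^ n * ‖x‖))
                = (1 + γbar) ^ n * γbar * B * M ^ n * ‖x‖ := by
              rw [mul_pow]; ring
            linarith [hMe]
        _ = S (n+1) * γbar * B * M ^ (n + 1 - 1) * ‖x‖ := by
            simp only [hS, Finset.sum_range_succ, Nat.add_sub_cancel]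
            ring
  exact (key L le_rfl).2
end

section
/- Under the same setup as the L-layer homotopic architecture (each f^{eq}_i, f^{neq}_i M-Lipschitz, f^{eq}_i(0)=0, ‖f^{neq}_i(x)‖ ≤ B‖x‖, B ≤ M), the refined bound ‖F_γ(x) − F_0(x)‖ ≤ [Σ_{k=0}^{L−1} |γ_{k+1}| (1 + (1/k)Σ_{j=1}^{k}|γ_j|)^k] · B · M^{L−1} · ‖x‖ holds for all x, where the summand at k = 0 is interpreted as |γ_1|. -/
/-!
Each layer `a ↦ f a + c • g a` multiplies norms by at most `M (1 + |c|)`, so the perturbed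
activations satisfy `‖z k‖ ≤ M ^ k ∏_{j<k} (1 + |γ j|) ‖x‖`. The error `e k = ‖z k - zeq k‖`
obeys the discrete Grönwall recursion `e (k+1) ≤ M e k + |γ k| B ‖z k‖`, which unrolls to
`∑_k |γ k| ∏_{j<k} (1 + |γ j|) · B M ^ (L-1) ‖x‖`; AM-GM bounds each product by
`(1 + mean_{j<k} |γ j|) ^ k`.
-/

open Finset

theorem Real.prod_le_arith_mean_pow {ι : Type*} (s : Finset ι) (a : ι → ℝ)
    (ha : ∀ i ∈ s, 0 ≤ a i) : ∏ i ∈ s, a i ≤ ((∑ i ∈ s, a i) / #s) ^ #s := by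
  rcases s.eq_empty_or_nonempty with rfl | hs
  · simp
  have hgm := Real.geom_mean_le_arith_mean s (fun _ => 1) a (fun _ _ => zero_le_one)
    (by simpa using hs) ha
  simp only [Real.rpow_one, sum_const, nsmul_eq_mul, mul_one, one_mul] at hgm
  calc ∏ i ∈ s, a i = ((∏ i ∈ s, a i) ^ ((#s : ℝ)⁻¹)) ^ #s :=
        (Real.rpow_inv_natCast_pow (prod_nonneg ha) hs.card_ne_zero).symm
    _ ≤ ((∑ i ∈ s, a i) / #s) ^ #s := by gcongr; exact Real.rpow_nonneg (prod_nonneg ha) _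

theorem Real.prod_one_add_le_one_add_mean_pow {ι : Type*} (s : Finset ι) (a : ι → ℝ)
    (ha : ∀ i ∈ s, 0 ≤ a i) :
    ∏ i ∈ s, (1 + a i) ≤ (1 + (1 / (#s : ℝ)) * ∑ i ∈ s, a i) ^ #s := by
  rcases s.eq_empty_or_nonempty with rfl | hs
  · simp
  have hmean : (∑ i ∈ s, (1 + a i)) / #s = 1 + (1 / (#s : ℝ)) * ∑ i ∈ s, a i := by
    have : (#s : ℝ) ≠ 0 := Nat.cast_ne_zero.mpr hs.card_ne_zero
    rw [sum_add_distrib, sum_const, nsmul_one]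
    field_simp
  rw [← hmean]
  exact Real.prod_le_arith_mean_pow s _ fun i hi => by linarith [ha i hi]

theorem le_prod_mul_of_le_mul {u c : ℕ → ℝ} {N : ℕ} (hc : ∀ n, 0 ≤ c n)
    (hu : ∀ n < N, u (n + 1) ≤ c n * u n) : ∀ n ≤ N, u n ≤ (∏ k ∈ range n, c k) * u 0 := by
  intro n hn
  induction n with
  | zero => simp
  | succ n ih =>
    calc u (n + 1) ≤ c n * u n := hu n hn
      _ ≤ c n * ((∏ k ∈ range n, c k) * u 0) := by gcongr; exacts [hc n, ih (by omega)]
      _ = (∏ k ∈ range (n + 1), c k) * u 0 := by rw [prod_range_succ]; ring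

theorem le_sum_mul_pow_pred_of_le_mul_add {e D : ℕ → ℝ} {M : ℝ} {N : ℕ} (hM : 0 ≤ M)
    (he0 : e 0 ≤ 0) (he : ∀ n < N, e (n + 1) ≤ M * e n + D n * M ^ n) :
    ∀ n ≤ N, e n ≤ (∑ k ∈ range n, D k) * M ^ (n - 1) := by
  intro n hn
  induction n with
  | zero => simpa using he0
  | succ n ih =>
    have hprev : M * e n ≤ (∑ k ∈ range n, D k) * M ^ n := by
      rcases n with _ | n
      · simpa using mul_nonpos_of_nonneg_of_nonpos hM he0
      · calc M * e (n + 1) ≤ M * ((∑ k ∈ range (n + 1), D k) * M ^ n) :=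
            mul_le_mul_of_nonneg_left (ih (by omega)) hM
          _ = (∑ k ∈ range (n + 1), D k) * M ^ (n + 1) := by ring
    calc e (n + 1) ≤ M * e n + D n * M ^ n := he n hn
      _ ≤ (∑ k ∈ range n, D k) * M ^ n + D n * M ^ n := by gcongr
      _ = (∑ k ∈ range (n + 1), D k) * M ^ (n + 1 - 1) := by
        rw [sum_range_succ, Nat.add_sub_cancel]; ring

section Layer

variable {E F : Type*} [NormedAddCommGroup E] [NormedAddCommGroup F] [NormedSpace ℝ F]
  {f g : E → F} {M B : ℝ}

theorem norm_add_smul_le (hf : ∀ a b, ‖f a - f b‖ ≤ M * ‖a - b‖) (hf0 : f 0 = 0)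
    (hg : ∀ a, ‖g a‖ ≤ B * ‖a‖) (hBM : B ≤ M) (c : ℝ) (a : E) :
    ‖f a + c • g a‖ ≤ M * (1 + |c|) * ‖a‖ := by
  have hfa : ‖f a‖ ≤ M * ‖a‖ := by simpa [hf0] using hf a 0
  calc ‖f a + c • g a‖ ≤ ‖f a‖ + |c| * ‖g a‖ := by
        rw [← Real.norm_eq_abs, ← norm_smul]; exact norm_add_le _ _
    _ ≤ M * ‖a‖ + |c| * (M * ‖a‖) := by
        gcongr; exact (hg a).trans (by gcongr)
    _ = M * (1 + |c|) * ‖a‖ := by ring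

theorem norm_add_smul_sub_le (hf : ∀ a b, ‖f a - f b‖ ≤ M * ‖a - b‖)
    (hg : ∀ a, ‖g a‖ ≤ B * ‖a‖) (c : ℝ) (a b : E) :
    ‖f a + c • g a - f b‖ ≤ M * ‖a - b‖ + |c| * B * ‖a‖ := by
  calc ‖f a + c • g a - f b‖ = ‖(f a - f b) + c • g a‖ := by rw [add_sub_right_comm]
    _ ≤ ‖f a - f b‖ + |c| * ‖g a‖ := by
        rw [← Real.norm_eq_abs, ← norm_smul]; exact norm_add_le _ _
    _ ≤ M * ‖a - b‖ + |c| * (B * ‖a‖) := by gcongr; exacts [hf a b, hg a]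
    _ = M * ‖a - b‖ + |c| * B * ‖a‖ := by ring

end Layer

theorem stmt5_general
    {Z : ℕ → Type*} [∀ i, NormedAddCommGroup (Z i)] [∀ i, NormedSpace ℝ (Z i)]
    (L : ℕ)
    (feq fneq : ∀ i, Z i → Z (i + 1)) (γ : ℕ → ℝ) (M B : ℝ)
    (hM : 0 ≤ M) (hB : 0 ≤ B) (hBM : B ≤ M)
    (hfeqLip : ∀ i, ∀ a b : Z i, ‖feq i a - feq i b‖ ≤ M * ‖a - b‖)
    (hfeq0 : ∀ i, feq i 0 = 0)
    (hfneqB : ∀ i, ∀ a : Z i, ‖fneq i a‖ ≤ B * ‖a‖)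
    (x : Z 0) (z zeq : ∀ i, Z i)
    (hz0 : z 0 = x) (hzeq0 : zeq 0 = x)
    (hz : ∀ i < L, z (i + 1) = feq i (z i) + γ i • fneq i (z i))
    (hzeq : ∀ i < L, zeq (i + 1) = feq i (zeq i)) :
    ‖z L - zeq L‖ ≤
      (∑ k ∈ Finset.range L,
          |γ k| * (1 + (1 / (k : ℝ)) * ∑ j ∈ Finset.range k, |γ j|) ^ k) *
        B * M ^ (L - 1) * ‖x‖ := by
  set P : ℕ → ℝ := fun k => ∏ j ∈ range k, (1 + |γ j|)
  have hzle : ∀ n ≤ L, ‖z n‖ ≤ M ^ n * P n * ‖x‖ := by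
    intro n hn
    have := le_prod_mul_of_le_mul (u := fun n => ‖z n‖) (c := fun n => M * (1 + |γ n|))
      (fun n => by positivity)
      (fun n hn => by
        rw [hz n hn]; exact norm_add_smul_le (hfeqLip n) (hfeq0 n) (hfneqB n) hBM _ _) n hn
    simpa [P, prod_mul_distrib, hz0] using this
  have hstep : ∀ n < L, ‖z (n + 1) - zeq (n + 1)‖ ≤
      M * ‖z n - zeq n‖ + |γ n| * P n * B * ‖x‖ * M ^ n := fun n hn => by
    rw [hz n hn, hzeq n hn]
    calc _ ≤ M * ‖z n - zeq n‖ + |γ n| * B * ‖z n‖ :=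
          norm_add_smul_sub_le (hfeqLip n) (hfneqB n) _ _ _
      _ ≤ M * ‖z n - zeq n‖ + |γ n| * B * (M ^ n * P n * ‖x‖) := by
          gcongr; exact hzle n hn.le
      _ = _ := by ring
  have herr := le_sum_mul_pow_pred_of_le_mul_add (e := fun n => ‖z n - zeq n‖)
    (D := fun k => |γ k| * P k * B * ‖x‖) hM (by simp [hz0, hzeq0]) hstep L le_rfl
  have hP : ∀ k, P k ≤ (1 + (1 / (k : ℝ)) * ∑ j ∈ range k, |γ j|) ^ k := fun k => by
    simpa using Real.prod_one_add_le_one_add_mean_pow (range k) (fun j => |γ j|)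
      (fun j _ => abs_nonneg _)
  calc ‖z L - zeq L‖ ≤ (∑ k ∈ range L, |γ k| * P k) * B * M ^ (L - 1) * ‖x‖ := by
        simpa only [← sum_mul, mul_right_comm _ (M ^ _)] using herr
    _ ≤ _ := by gcongr with k; exact hP k

theorem stmt5
    {Z : ℕ → Type*} [∀ i, NormedAddCommGroup (Z i)] [∀ i, NormedSpace ℝ (Z i)]
    (L : ℕ) (hL : 1 ≤ L)
    (feq fneq : ∀ i, Z i → Z (i + 1)) (γ : ℕ → ℝ) (M B : ℝ)
    (hM : 0 ≤ M) (hB : 0 ≤ B) (hBM : B ≤ M)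
    (hfeqLip : ∀ i, ∀ a b : Z i, ‖feq i a - feq i b‖ ≤ M * ‖a - b‖)
    (hfeq0 : ∀ i, feq i 0 = 0)
    (hfneqLip : ∀ i, ∀ a b : Z i, ‖fneq i a - fneq i b‖ ≤ M * ‖a - b‖)
    (hfneqB : ∀ i, ∀ a : Z i, ‖fneq i a‖ ≤ B * ‖a‖)
    (x : Z 0) (z zeq : ∀ i, Z i)
    (hz0 : z 0 = x) (hzeq0 : zeq 0 = x)
    (hz : ∀ i < L, z (i + 1) = feq i (z i) + γ i • fneq i (z i))
    (hzeq : ∀ i < L, zeq (i + 1) = feq i (zeq i)) :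
    ‖z L - zeq L‖ ≤
      (∑ k ∈ Finset.range L,
          |γ k| * (1 + (1 / (k : ℝ)) * ∑ j ∈ Finset.range k, |γ j|) ^ k) *
        B * M ^ (L - 1) * ‖x‖ :=
  stmt5_general L feq fneq γ M B hM hB hBM hfeqLip hfeq0 hfneqB x z zeq hz0 hzeq0 hz hzeq
end

section
/- Under the same L-layer homotopic architecture assumptions (each f^{eq}_i equivariant and M-Lipschitz with f^{eq}_i(0)=0, ‖f^{neq}_i(x)‖ ≤ B‖x‖, M-Lipschitz f^{neq}_i, group actions bounded by B), with C = max(B/M, 1), the refined equivariance error bound holds: ‖ρ_L(g)F_γ(x) − F_γ(ρ_0(g)x)‖ ≤ 2 Σ_{k=1}^{L} |γ_k| (1 + (C/(L−1)) Σ_{j≠k} |γ_j|)^{L−1} · B² · M^{L−1} · ‖x‖, for all x and group elements g, assuming L ≥ 2. -/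
open Finset

private lemma amgm_aux (s : Finset ℕ) (f : ℕ → ℝ) (hf : ∀ j ∈ s, 0 ≤ f j)
    (n : ℕ) (hn : s.card = n) (hn0 : 0 < n) :
    ∏ j ∈ s, f j ≤ ((∑ j ∈ s, f j) / n) ^ n := by
  have hnR : (0:ℝ) < n := by exact_mod_cast hn0
  have hw : ∑ _j ∈ s, (n:ℝ)⁻¹ = 1 := by
    rw [Finset.sum_const, hn, nsmul_eq_mul, mul_inv_cancel₀ (ne_of_gt hnR)]
  have h := Real.geom_mean_le_arith_mean_weighted s (fun _ => (n:ℝ)⁻¹) f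
    (fun i _ => by positivity) hw hf
  have hkey : ∀ j ∈ s, (f j ^ ((n:ℝ)⁻¹)) ^ n = f j := by
    intro j hj
    rw [← Real.rpow_natCast (f j ^ ((n:ℝ)⁻¹)) n, ← Real.rpow_mul (hf j hj),
      inv_mul_cancel₀ (ne_of_gt hnR), Real.rpow_one]
  calc ∏ j ∈ s, f j = (∏ j ∈ s, f j ^ ((n:ℝ)⁻¹)) ^ n := by
        rw [← Finset.prod_pow]
        exact (Finset.prod_congr rfl hkey).symm
    _ ≤ (∑ j ∈ s, (n:ℝ)⁻¹ * f j) ^ n := by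
        apply pow_le_pow_left₀ (Finset.prod_nonneg fun i hi => Real.rpow_nonneg (hf i hi) _) h
    _ = ((∑ j ∈ s, f j) / n) ^ n := by
        rw [← Finset.mul_sum]
        ring_nf

theorem stmt9
    {Z : ℕ → Type*} [∀ i, NormedAddCommGroup (Z i)] [∀ i, NormedSpace ℝ (Z i)]
    (L : ℕ) (hL : 2 ≤ L)
    (feq fneq : ∀ i, Z i → Z (i + 1)) (ρ : ∀ i, Z i →ₗ[ℝ] Z i)
    (γ : ℕ → ℝ) (M B : ℝ)
    (hM : 0 < M) (hB : 0 ≤ B)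
    (hfeqLip : ∀ i, ∀ a b : Z i, ‖feq i a - feq i b‖ ≤ M * ‖a - b‖)
    (hfeq0 : ∀ i, feq i 0 = 0)
    (hfneqLip : ∀ i, ∀ a b : Z i, ‖fneq i a - fneq i b‖ ≤ M * ‖a - b‖)
    (hfneqB : ∀ i, ∀ a : Z i, ‖fneq i a‖ ≤ B * ‖a‖)
    (hρ : ∀ i, ∀ a : Z i, ‖ρ i a‖ ≤ B * ‖a‖)
    (hequiv : ∀ i, ∀ a : Z i, feq i (ρ i a) = ρ (i + 1) (feq i a))
    (x : Z 0) (z ztil : ∀ i, Z i)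
    (hz0 : z 0 = x) (hztil0 : ztil 0 = ρ 0 x)
    (hz : ∀ i < L, z (i + 1) = feq i (z i) + γ i • fneq i (z i))
    (hztil : ∀ i < L, ztil (i + 1) = feq i (ztil i) + γ i • fneq i (ztil i)) :
    ‖ρ L (z L) - ztil L‖ ≤
      2 * (∑ k ∈ Finset.range L,
            |γ k| * (1 + max (B / M) 1 / ((L : ℝ) - 1) *
              ∑ j ∈ (Finset.range L).erase k, |γ j|) ^ (L - 1)) *
        B ^ 2 * M ^ (L - 1) * ‖x‖ := by
  set C := max (B / M) 1 with hCdef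
  have hC1 : (1:ℝ) ≤ C := le_max_right _ _
  have hC0 : (0:ℝ) ≤ C := by linarith
  have hBCM : B ≤ C * M := by
    have h1 : B / M ≤ C := le_max_left _ _
    calc B = (B / M) * M := by field_simp
      _ ≤ C * M := mul_le_mul_of_nonneg_right h1 hM.le
  set P : ℕ → ℝ := fun i => ∏ j ∈ Finset.range i, (1 + C * |γ j|) with hPdef
  set S : ℕ → ℝ := fun i =>
    ∑ k ∈ Finset.range i, |γ k| * ∏ j ∈ (Finset.range i).erase k, (1 + C * |γ j|) with hSdef
  have hfac : ∀ j : ℕ, (0:ℝ) ≤ 1 + C * |γ j| := by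
    intro j
    have := mul_nonneg hC0 (abs_nonneg (γ j))
    linarith
  have hP0 : ∀ i, 0 ≤ P i := fun i => Finset.prod_nonneg fun j _ => hfac j
  have hS0 : ∀ i, 0 ≤ S i := fun i => Finset.sum_nonneg fun k _ =>
    mul_nonneg (abs_nonneg _) (Finset.prod_nonneg fun j _ => hfac j)
  -- growth bound on z
  have hzb : ∀ i ≤ L, ‖z i‖ ≤ M ^ i * P i * ‖x‖ := by
    intro i
    induction i with
    | zero => intro _; simp [hz0, hPdef]
    | succ i ih =>
      intro hiL
      have hi : i < L := Nat.lt_of_succ_le hiL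
      have ihz := ih (le_of_lt hi)
      rw [hz i hi]
      have h1 : ‖feq i (z i)‖ ≤ M * ‖z i‖ := by
        have := hfeqLip i (z i) 0
        simpa [hfeq0 i] using this
      have h2 : ‖fneq i (z i)‖ ≤ B * ‖z i‖ := hfneqB i (z i)
      have hMC : 0 ≤ M * (1 + C * |γ i|) :=
        mul_nonneg hM.le (hfac i)
      calc ‖feq i (z i) + γ i • fneq i (z i)‖
          ≤ ‖feq i (z i)‖ + |γ i| * ‖fneq i (z i)‖ := by
            refine (norm_add_le _ _).trans ?_
            rw [norm_smul, Real.norm_eq_abs]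
        _ ≤ M * ‖z i‖ + |γ i| * (C * M * ‖z i‖) := by
            gcongr
            exact h2.trans (mul_le_mul_of_nonneg_right hBCM (norm_nonneg _))
        _ = M * (1 + C * |γ i|) * ‖z i‖ := by ring
        _ ≤ M * (1 + C * |γ i|) * (M ^ i * P i * ‖x‖) :=
            mul_le_mul_of_nonneg_left ihz hMC
        _ = M ^ (i + 1) * P (i + 1) * ‖x‖ := by
            simp only [hPdef, Finset.prod_range_succ, pow_succ]
            ring
  -- recurrence for S
  have hSsucc : ∀ i, S (i + 1) = (1 + C * |γ i|) * S i + |γ i| * P i := by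
    intro i
    have hnotmem : i ∉ Finset.range i := by simp
    simp only [hSdef, hPdef]
    rw [Finset.range_add_one, Finset.sum_insert hnotmem, Finset.erase_insert hnotmem]
    rw [add_comm, Finset.mul_sum]
    congr 1
    apply Finset.sum_congr rfl
    intro k hk
    have hki : i ≠ k := (Finset.mem_range.mp hk).ne'
    rw [Finset.erase_insert_of_ne hki, Finset.prod_insert (by simp)]
    ring
  -- error bound
  have herr : ∀ i ≤ L, M * ‖ρ i (z i) - ztil i‖ ≤ 2 * B ^ 2 * M ^ i * S i * ‖x‖ := by
    intro i
    induction i with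
    | zero =>
      intro _
      simp [hz0, hztil0, hSdef]
    | succ i ih =>
      intro hiL
      have hi : i < L := Nat.lt_of_succ_le hiL
      have ihe := ih (le_of_lt hi)
      have ihz := hzb i (le_of_lt hi)
      have hid : ρ (i + 1) (z (i + 1)) - ztil (i + 1) =
          (feq i (ρ i (z i)) - feq i (ztil i))
          + γ i • (ρ (i + 1) (fneq i (z i)) - fneq i (ρ i (z i)))
          + γ i • (fneq i (ρ i (z i)) - fneq i (ztil i)) := by
        rw [hz i hi, hztil i hi, map_add, map_smul, ← hequiv i (z i)]
        simp only [smul_sub]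
        abel
      have hstep : ‖ρ (i + 1) (z (i + 1)) - ztil (i + 1)‖ ≤
          M * ‖ρ i (z i) - ztil i‖
          + |γ i| * (2 * B ^ 2 * ‖z i‖ + M * ‖ρ i (z i) - ztil i‖) := by
        rw [hid]
        have t1 : ‖feq i (ρ i (z i)) - feq i (ztil i)‖ ≤ M * ‖ρ i (z i) - ztil i‖ :=
          hfeqLip i _ _
        have t2 : ‖ρ (i + 1) (fneq i (z i)) - fneq i (ρ i (z i))‖ ≤ 2 * B ^ 2 * ‖z i‖ := by
          calc ‖ρ (i + 1) (fneq i (z i)) - fneq i (ρ i (z i))‖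
              ≤ ‖ρ (i + 1) (fneq i (z i))‖ + ‖fneq i (ρ i (z i))‖ := norm_sub_le _ _
            _ ≤ B * (B * ‖z i‖) + B * (B * ‖z i‖) := by
                gcongr
                · exact (hρ (i + 1) _).trans
                    (mul_le_mul_of_nonneg_left (hfneqB i _) hB)
                · exact (hfneqB i _).trans
                    (mul_le_mul_of_nonneg_left (hρ i _) hB)
            _ = 2 * B ^ 2 * ‖z i‖ := by ring
        have t3 : ‖fneq i (ρ i (z i)) - fneq i (ztil i)‖ ≤ M * ‖ρ i (z i) - ztil i‖ :=
          hfneqLip i _ _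
        calc ‖(feq i (ρ i (z i)) - feq i (ztil i))
              + γ i • (ρ (i + 1) (fneq i (z i)) - fneq i (ρ i (z i)))
              + γ i • (fneq i (ρ i (z i)) - fneq i (ztil i))‖
            ≤ ‖feq i (ρ i (z i)) - feq i (ztil i)‖
              + ‖γ i • (ρ (i + 1) (fneq i (z i)) - fneq i (ρ i (z i)))‖
              + ‖γ i • (fneq i (ρ i (z i)) - fneq i (ztil i))‖ := norm_add₃_le
          _ = ‖feq i (ρ i (z i)) - feq i (ztil i)‖
              + |γ i| * ‖ρ (i + 1) (fneq i (z i)) - fneq i (ρ i (z i))‖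
              + |γ i| * ‖fneq i (ρ i (z i)) - fneq i (ztil i)‖ := by
                rw [norm_smul, norm_smul, Real.norm_eq_abs]
          _ ≤ M * ‖ρ i (z i) - ztil i‖
              + |γ i| * (2 * B ^ 2 * ‖z i‖)
              + |γ i| * (M * ‖ρ i (z i) - ztil i‖) := by gcongr
          _ = M * ‖ρ i (z i) - ztil i‖
              + |γ i| * (2 * B ^ 2 * ‖z i‖ + M * ‖ρ i (z i) - ztil i‖) := by ring
      calc M * ‖ρ (i + 1) (z (i + 1)) - ztil (i + 1)‖
          ≤ M * (M * ‖ρ i (z i) - ztil i‖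
            + |γ i| * (2 * B ^ 2 * ‖z i‖ + M * ‖ρ i (z i) - ztil i‖)) :=
            mul_le_mul_of_nonneg_left hstep hM.le
        _ = (1 + |γ i|) * (M * (M * ‖ρ i (z i) - ztil i‖))
            + 2 * B ^ 2 * M * (|γ i| * ‖z i‖) := by ring
        _ ≤ (1 + C * |γ i|) * (M * (2 * B ^ 2 * M ^ i * S i * ‖x‖))
            + 2 * B ^ 2 * M * (|γ i| * (M ^ i * P i * ‖x‖)) := by
            have g1 : (1 + |γ i|) * (M * (M * ‖ρ i (z i) - ztil i‖)) ≤
                (1 + C * |γ i|) * (M * (2 * B ^ 2 * M ^ i * S i * ‖x‖)) := by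
              apply mul_le_mul
              · nlinarith [abs_nonneg (γ i)]
              · exact mul_le_mul_of_nonneg_left ihe hM.le
              · positivity
              · exact hfac i
            have g2 : 2 * B ^ 2 * M * (|γ i| * ‖z i‖) ≤
                2 * B ^ 2 * M * (|γ i| * (M ^ i * P i * ‖x‖)) := by
              have h := mul_le_mul_of_nonneg_left ihz (abs_nonneg (γ i))
              exact mul_le_mul_of_nonneg_left h (by positivity)
            exact add_le_add g1 g2
        _ = 2 * B ^ 2 * M ^ (i + 1) * ((1 + C * |γ i|) * S i + |γ i| * P i) * ‖x‖ := by
            rw [pow_succ]; ring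
        _ = 2 * B ^ 2 * M ^ (i + 1) * S (i + 1) * ‖x‖ := by rw [hSsucc i]
  -- from M * e_L ≤ ... deduce e_L ≤ 2 B² M^{L-1} S L ‖x‖
  have hL1 : 1 ≤ L := le_trans (by norm_num) hL
  have hML : M ^ L = M * M ^ (L - 1) := by
    rw [← pow_succ' M (L - 1)]
    congr 1
    omega
  have heL : ‖ρ L (z L) - ztil L‖ ≤ 2 * B ^ 2 * M ^ (L - 1) * S L * ‖x‖ := by
    have h := herr L le_rfl
    rw [hML] at h
    nlinarith [norm_nonneg (ρ L (z L) - ztil L)]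
  -- AM-GM step
  have hcastL : ((L - 1 : ℕ) : ℝ) = (L : ℝ) - 1 := by
    push_cast [Nat.cast_sub hL1]
    ring
  have hLpos : (0:ℝ) < (L:ℝ) - 1 := by
    rw [← hcastL]
    exact_mod_cast Nat.sub_pos_of_lt (lt_of_lt_of_le Nat.one_lt_two hL)
  have hSbound : S L ≤ ∑ k ∈ Finset.range L,
      |γ k| * (1 + C / ((L : ℝ) - 1) *
        ∑ j ∈ (Finset.range L).erase k, |γ j|) ^ (L - 1) := by
    apply Finset.sum_le_sum
    intro k hk
    apply mul_le_mul_of_nonneg_left _ (abs_nonneg _)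
    have hcard : ((Finset.range L).erase k).card = L - 1 := by
      rw [Finset.card_erase_of_mem hk, Finset.card_range]
    have hamgm := amgm_aux ((Finset.range L).erase k) (fun j => 1 + C * |γ j|)
      (fun j _ => hfac j) (L - 1) hcard
      (Nat.sub_pos_of_lt (lt_of_lt_of_le Nat.one_lt_two hL))
    refine hamgm.trans (le_of_eq ?_)
    congr 1
    rw [Finset.sum_add_distrib, Finset.sum_const, hcard, nsmul_eq_mul,
      ← Finset.mul_sum, hcastL]
    field_simp
  calc ‖ρ L (z L) - ztil L‖ ≤ 2 * B ^ 2 * M ^ (L - 1) * S L * ‖x‖ := heL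
    _ ≤ 2 * B ^ 2 * M ^ (L - 1) * (∑ k ∈ Finset.range L,
          |γ k| * (1 + C / ((L : ℝ) - 1) *
            ∑ j ∈ (Finset.range L).erase k, |γ j|) ^ (L - 1)) * ‖x‖ := by
        gcongr
    _ = 2 * (∑ k ∈ Finset.range L,
          |γ k| * (1 + C / ((L : ℝ) - 1) *
            ∑ j ∈ (Finset.range L).erase k, |γ j|) ^ (L - 1)) *
        B ^ 2 * M ^ (L - 1) * ‖x‖ := by ring
end
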